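/- Under the standing hypotheses (conformal free-boundary Y-cone data), define h(z) = Σ_{j=1}^{3} u_{j,zz}(z) · u_{j,zz}(z), where v·w denotes the complex-bilinear dot product Σ_k v_k w_k on ℂ³. Then z⁴ h(z) = 0 for every z ∈ D̂; equivalently, h vanishes identically on D̂. -/

import Mathlib

noncomputable section

/-- The closed half-disk `D̂ = {z : |z| ≤ 1, Re z ≥ 0}`. -/
def Dhat : Set ℂ := {z | ‖z‖ ≤ 1 ∧ 0 ≤ z.re}

/-- The junction segment `γ = {Re z = 0, |Im z| ≤ 1}`. -/
def gammaJ : Set ℂ := {z | z.re = 0 ∧ |z.im| ≤ 1}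

/-- The circular arc `σ = {|z| = 1, Re z ≥ 0}`. -/
def sigmaArc : Set ℂ := {z | ‖z‖ = 1 ∧ 0 ≤ z.re}

/-- The closed unit disk. -/
def Dbar : Set ℂ := {z | ‖z‖ ≤ 1}

/-- x-partial derivative of a map `ℂ → ℝ³`. -/
def vX (u : ℂ → Fin 3 → ℝ) (z : ℂ) : Fin 3 → ℝ :=
  fun k => fderiv ℝ (fun w => u w k) z 1

/-- y-partial derivative of a map `ℂ → ℝ³`. -/
def vY (u : ℂ → Fin 3 → ℝ) (z : ℂ) : Fin 3 → ℝ :=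
  fun k => fderiv ℝ (fun w => u w k) z Complex.I

/-- Laplacian of a real-valued function on `ℂ ≃ ℝ²`. -/
def lap (f : ℂ → ℝ) (z : ℂ) : ℝ :=
  fderiv ℝ (fun w => fderiv ℝ f w 1) z 1 +
    fderiv ℝ (fun w => fderiv ℝ f w Complex.I) z Complex.I

/-- Wirtinger derivative `∂_z = (1/2)(∂_x - i ∂_y)` of a complex-valued function. -/
def dzC (f : ℂ → ℂ) (z : ℂ) : ℂ :=
  (1/2) * (fderiv ℝ f z 1 - Complex.I * fderiv ℝ f z Complex.I)

/-- `u_{zz} = ∂_z ∂_z u ∈ ℂ³`, componentwise. -/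
def uzz (u : ℂ → Fin 3 → ℝ) (z : ℂ) : Fin 3 → ℂ :=
  fun k => dzC (fun w => dzC (fun w' => ((u w' k : ℝ) : ℂ)) w) z

/-- `h(z) = Σ_j u_{j,zz} · u_{j,zz}` (complex-bilinear dot product). -/
def hfun (u : Fin 3 → ℂ → Fin 3 → ℝ) (z : ℂ) : ℂ :=
  ∑ j : Fin 3, ∑ k : Fin 3, (uzz (u j) z k) ^ 2

/-- Standing hypotheses: conformal free-boundary Y-cone data. -/
def StandingHyp (u : Fin 3 → ℂ → Fin 3 → ℝ) (U : Set ℂ) : Prop :=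
  IsOpen U ∧ Dhat ⊆ U ∧
  (∀ j k, ContDiffOn ℝ (⊤ : ℕ∞) (fun z => u j z k) U) ∧
  (∀ j k, ∀ z ∈ U, lap (fun w => u j w k) z = 0) ∧
  (∀ j, ∀ z ∈ Dhat,
      (∑ k : Fin 3, vX (u j) z k * vY (u j) z k) = 0 ∧
      (∑ k : Fin 3, (vX (u j) z k) ^ 2) = (∑ k : Fin 3, (vY (u j) z k) ^ 2) ∧
      vX (u j) z ≠ 0) ∧
  (∀ z ∈ gammaJ, u 0 z = u 1 z ∧ u 1 z = u 2 z) ∧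
  (∀ z ∈ gammaJ, ∀ k, vX (u 0) z k + vX (u 1) z k + vX (u 2) z k = 0) ∧
  (∀ j, ∀ z ∈ sigmaArc,
      (∑ k : Fin 3, (u j z k) ^ 2) = 1 ∧
      ∃ c : ℝ, ∀ k, z.re * vX (u j) z k + z.im * vY (u j) z k = c * u j z k)

/-- The index form of the free-boundary flat Y-cone. -/
def Qform (f : Fin 3 → ℂ → ℝ) : ℝ :=
  ∑ j : Fin 3,
    ((∫ z in Dhat, ((fderiv ℝ (f j) z 1) ^ 2 + (fderiv ℝ (f j) z Complex.I) ^ 2)) -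
      ∫ θ in (-(Real.pi / 2))..(Real.pi / 2), (f j (Complex.exp (θ * Complex.I))) ^ 2)

/-- A compatible triple: each `f j` is C¹ near `D̂` and `f₁+f₂+f₃ = 0` on `γ`. -/
def Compatible (f : Fin 3 → ℂ → ℝ) : Prop :=
  (∀ j, ∃ V : Set ℂ, IsOpen V ∧ Dhat ⊆ V ∧ ContDiffOn ℝ 1 (f j) V) ∧
  ∀ z ∈ gammaJ, f 0 z + f 1 z + f 2 z = 0

open Complex Set Filter Topology

lemma complex_decomp (v : ℂ) : v = v.re • (1:ℂ) + v.im • I := by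
  simp [real_smul, Complex.ext_iff]

lemma clm_decomp {F : Type*} [NormedAddCommGroup F] [NormedSpace ℝ F]
    (L : ℂ →L[ℝ] F) (v : ℂ) : L v = v.re • L 1 + v.im • L I := by
  conv_lhs => rw [complex_decomp v]
  rw [map_add, map_smul, map_smul]

lemma clm_decomp' (L : ℂ →L[ℝ] ℝ) (v : ℂ) : L v = v.re * L 1 + v.im * L I := by
  rw [clm_decomp]; simp [smul_eq_mul]

lemma hasFDerivAt_ofReal_comp {f : ℂ → ℝ} {z : ℂ} {L : ℂ →L[ℝ] ℝ}
    (hf : HasFDerivAt f L z) :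
    HasFDerivAt (fun w => ((f w : ℝ) : ℂ)) (Complex.ofRealCLM.comp L) z :=
  Complex.ofRealCLM.hasFDerivAt.comp z hf

/-- `dzC` of a complex-differentiable function is its derivative. -/
lemma dzC_of_hasDerivAt {g : ℂ → ℂ} {d z : ℂ} (h : HasDerivAt g d z) : dzC g z = d := by
  have hR := h.hasFDerivAt.restrictScalars ℝ
  have h1 : fderiv ℝ g z = (ContinuousLinearMap.smulRight (1 : ℂ →L[ℂ] ℂ) d).restrictScalars ℝ :=
    hR.fderiv
  simp only [dzC, h1]
  simp only [ContinuousLinearMap.coe_restrictScalars', ContinuousLinearMap.smulRight_apply,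
    ContinuousLinearMap.one_apply, smul_eq_mul]
  have : I * (I * d) = -d := by
    rw [← mul_assoc, I_mul_I, neg_one_mul]
  rw [this]; ring

/-- `dzC` of the coercion of a real function. -/
lemma dzC_ofReal {f : ℂ → ℝ} {z : ℂ} (hf : DifferentiableAt ℝ f z) :
    dzC (fun w => ((f w : ℝ) : ℂ)) z
      = (1/2 : ℂ) * (↑(fderiv ℝ f z 1) - I * ↑(fderiv ℝ f z I)) := by
  have h := (hasFDerivAt_ofReal_comp hf.hasFDerivAt).fderiv
  simp only [dzC, h, ContinuousLinearMap.coe_comp', Function.comp_apply, ofRealCLM_apply]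

lemma dzC_congr {F G : ℂ → ℂ} {z : ℂ} (h : F =ᶠ[𝓝 z] G) : dzC F z = dzC G z := by
  unfold dzC; rw [h.fderiv_eq]

lemma diffAt_of_contDiffOn {f : ℂ → ℝ} {U : Set ℂ} (hU : IsOpen U)
    (hf : ContDiffOn ℝ (⊤ : ℕ∞) f U) {z : ℂ} (hz : z ∈ U) : DifferentiableAt ℝ f z :=
  (hf.differentiableOn (by simp)).differentiableAt (hU.mem_nhds hz)

lemma contDiffOn_fderiv_apply {f : ℂ → ℝ} {U : Set ℂ} (hU : IsOpen U)
    (hf : ContDiffOn ℝ (⊤ : ℕ∞) f U) (v : ℂ) :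
    ContDiffOn ℝ (⊤ : ℕ∞) (fun w => fderiv ℝ f w v) U := by
  have hF : ContDiffOn ℝ (⊤ : ℕ∞) (fderiv ℝ f) U := hf.fderiv_of_isOpen hU (by simp)
  exact (ContinuousLinearMap.apply ℝ ℝ v).contDiff.comp_contDiffOn hF

lemma clairaut {f : ℂ → ℝ} {U : Set ℂ} (hU : IsOpen U) (hf : ContDiffOn ℝ (⊤ : ℕ∞) f U)
    {z : ℂ} (hz : z ∈ U) (a b : ℂ) :
    fderiv ℝ (fun w => fderiv ℝ f w a) z b = fderiv ℝ (fun w => fderiv ℝ f w b) z a := by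
  have hF : ContDiffOn ℝ (⊤ : ℕ∞) (fderiv ℝ f) U := hf.fderiv_of_isOpen hU (by simp)
  have hFd : DifferentiableAt ℝ (fderiv ℝ f) z :=
    (hF.differentiableOn (by simp)).differentiableAt (hU.mem_nhds hz)
  have hev : ∀ᶠ y in 𝓝 z, HasFDerivAt f (fderiv ℝ f y) y := by
    filter_upwards [hU.mem_nhds hz] with y hy
    exact (diffAt_of_contDiffOn hU hf hy).hasFDerivAt
  have hsym := second_derivative_symmetric_of_eventually hev hFd.hasFDerivAt
  have ea : ∀ c d : ℂ, fderiv ℝ (fun w => fderiv ℝ f w c) z d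
      = fderiv ℝ (fderiv ℝ f) z d c := by
    intro c d
    have h2 := ((ContinuousLinearMap.apply ℝ ℝ c).hasFDerivAt.comp z hFd.hasFDerivAt).fderiv
    have h3 : (fun w => fderiv ℝ f w c)
        = (ContinuousLinearMap.apply ℝ ℝ c) ∘ (fderiv ℝ f) := rfl
    rw [h3, h2]; rfl
  rw [ea a b, ea b a, hsym b a]

lemma holo_of_harmonic {f : ℂ → ℝ} {U : Set ℂ} (hU : IsOpen U)
    (hf : ContDiffOn ℝ (⊤ : ℕ∞) f U) (hl : ∀ z ∈ U, lap f z = 0) {z : ℂ} (hz : z ∈ U) :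
    HasDerivAt (fun w => (1/2 : ℂ) * (↑(fderiv ℝ f w 1) - I * ↑(fderiv ℝ f w I)))
      ((1/2 : ℂ) * (↑(fderiv ℝ (fun w => fderiv ℝ f w 1) z 1)
         - I * ↑(fderiv ℝ (fun w => fderiv ℝ f w I) z 1))) z := by
  set fx : ℂ → ℝ := fun w => fderiv ℝ f w 1 with hfxdef
  set fy : ℂ → ℝ := fun w => fderiv ℝ f w I with hfydef
  have hfx : ContDiffOn ℝ (⊤ : ℕ∞) fx U := contDiffOn_fderiv_apply hU hf 1
  have hfy : ContDiffOn ℝ (⊤ : ℕ∞) fy U := contDiffOn_fderiv_apply hU hf I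
  have hdx : DifferentiableAt ℝ fx z := diffAt_of_contDiffOn hU hfx hz
  have hdy : DifferentiableAt ℝ fy z := diffAt_of_contDiffOn hU hfy hz
  set Lx := fderiv ℝ fx z with hLx
  set Ly := fderiv ℝ fy z with hLy
  have hGx : HasFDerivAt (fun w => ((fx w : ℝ) : ℂ)) (Complex.ofRealCLM.comp Lx) z :=
    hasFDerivAt_ofReal_comp hdx.hasFDerivAt
  have hGy : HasFDerivAt (fun w => ((fy w : ℝ) : ℂ)) (Complex.ofRealCLM.comp Ly) z :=
    hasFDerivAt_ofReal_comp hdy.hasFDerivAt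
  have hG : HasFDerivAt (fun w => (1/2 : ℂ) * (↑(fx w) - I * ↑(fy w)))
      ((1/2 : ℂ) • ((Complex.ofRealCLM.comp Lx) - I • (Complex.ofRealCLM.comp Ly))) z := by
    exact ((hGx.sub (hGy.const_mul I)).const_mul (1/2 : ℂ))
  set d : ℂ := (1/2 : ℂ) * (↑(Lx 1) - I * ↑(Ly 1)) with hd
  have hCR1 : Lx I = Ly 1 := clairaut hU hf hz 1 I
  have hCR2 : Ly I = -(Lx 1) := by
    have := hl z hz
    simp only [lap] at this
    linarith [this]
  have hLeq : (ContinuousLinearMap.smulRight (1 : ℂ →L[ℂ] ℂ) d).restrictScalars ℝ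
      = ((1/2 : ℂ) • ((Complex.ofRealCLM.comp Lx) - I • (Complex.ofRealCLM.comp Ly))) := by
    apply ContinuousLinearMap.ext
    intro v
    have lhs : ((ContinuousLinearMap.smulRight (1 : ℂ →L[ℂ] ℂ) d).restrictScalars ℝ) v
        = v * d := by
      simp [smul_eq_mul]
    rw [lhs, clm_decomp _ v]
    simp only [ContinuousLinearMap.smul_apply, ContinuousLinearMap.sub_apply,
      ContinuousLinearMap.coe_smul', Pi.smul_apply, ContinuousLinearMap.coe_comp',
      Function.comp_apply, ofRealCLM_apply, hCR1, hCR2]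
    rw [hd]
    simp only [real_smul, smul_eq_mul]
    push_cast
    linear_combination (-(1/2 : ℂ) * (((Lx 1:ℝ):ℂ) - I*((Ly 1 : ℝ):ℂ))) * (Complex.re_add_im v) + (-(1/2 : ℂ) * ((Ly 1:ℝ):ℂ) * (v.im:ℂ)) * Complex.I_sq
  have hG' : HasFDerivAt (fun w => (1/2 : ℂ) * (↑(fx w) - I * ↑(fy w)))
      (ContinuousLinearMap.smulRight (1 : ℂ →L[ℂ] ℂ) d) z :=
    hasFDerivAt_of_restrictScalars ℝ hG hLeq
  exact hasDerivAt_iff_hasFDerivAt.mpr hG'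

/-- The Wirtinger derivative `u_z`, componentwise, as an explicit function. -/
def gg (u : Fin 3 → ℂ → Fin 3 → ℝ) (j k : Fin 3) (w : ℂ) : ℂ :=
  (1/2 : ℂ) * (↑(fderiv ℝ (fun x => u j x k) w 1) - I * ↑(fderiv ℝ (fun x => u j x k) w I))

/-- `h` re-expressed through complex derivatives of `gg`. -/
def hh (u : Fin 3 → ℂ → Fin 3 → ℝ) (z : ℂ) : ℂ :=
  ∑ j : Fin 3, ∑ k : Fin 3, (deriv (gg u j k) z) ^ 2

section main
variable {u : Fin 3 → ℂ → Fin 3 → ℝ} {U : Set ℂ} (hU : IsOpen U)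
  (hsm : ∀ j k, ContDiffOn ℝ (⊤ : ℕ∞) (fun z => u j z k) U)
  (hlap : ∀ j k, ∀ z ∈ U, lap (fun w => u j w k) z = 0)

include hU hsm hlap

lemma gg_hasDerivAt (j k : Fin 3) {z : ℂ} (hz : z ∈ U) :
    HasDerivAt (gg u j k) (deriv (gg u j k) z) z := by
  have h := holo_of_harmonic hU (hsm j k) (hlap j k) hz
  have h' : HasDerivAt (gg u j k)
      ((1/2 : ℂ) * (↑(fderiv ℝ (fun w => fderiv ℝ (fun x => u j x k) w 1) z 1)
        - I * ↑(fderiv ℝ (fun w => fderiv ℝ (fun x => u j x k) w I) z 1))) z := h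
  rw [h'.deriv]; exact h'

lemma gg_diffOn (j k : Fin 3) : DifferentiableOn ℂ (gg u j k) U := fun z hz =>
  ((gg_hasDerivAt hU hsm hlap j k hz).differentiableAt).differentiableWithinAt

lemma gg_analytic (j k : Fin 3) : AnalyticOnNhd ℂ (gg u j k) U :=
  (gg_diffOn hU hsm hlap j k).analyticOnNhd hU

lemma dgg_analytic (j k : Fin 3) : AnalyticOnNhd ℂ (deriv (gg u j k)) U :=
  (gg_analytic hU hsm hlap j k).deriv

lemma hh_analytic : AnalyticOnNhd ℂ (hh u) U := by
  apply Finset.analyticOnNhd_fun_sum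
  intro j _
  apply Finset.analyticOnNhd_fun_sum
  intro k _
  exact (dgg_analytic hU hsm hlap j k).pow 2

lemma uzz_eq (j k : Fin 3) {z : ℂ} (hz : z ∈ U) :
    uzz (u j) z k = deriv (gg u j k) z := by
  have hev : (fun w => dzC (fun w' => ((u j w' k : ℝ) : ℂ)) w) =ᶠ[𝓝 z] gg u j k := by
    filter_upwards [hU.mem_nhds hz] with y hy
    exact dzC_ofReal (diffAt_of_contDiffOn hU (hsm j k) hy)
  have h1 : uzz (u j) z k = dzC (gg u j k) z := dzC_congr hev
  rw [h1, dzC_of_hasDerivAt (gg_hasDerivAt hU hsm hlap j k hz)]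

lemma hfun_eq_hh {z : ℂ} (hz : z ∈ U) : hfun u z = hh u z := by
  unfold hfun hh
  refine Finset.sum_congr rfl fun j _ => Finset.sum_congr rfl fun k _ => ?_
  rw [uzz_eq hU hsm hlap j k hz]

end main

lemma sum_sq_expand (x y : Fin 3 → ℝ) :
    ∑ k : Fin 3, ((1/2:ℂ) * (↑(x k) - I * ↑(y k)))^2
      = ↑((∑ k : Fin 3, (x k)^2 - ∑ k : Fin 3, (y k)^2)/4)
        - I * ↑((∑ k : Fin 3, x k * y k)/2) := by
  simp only [Fin.sum_univ_three]
  push_cast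
  linear_combination ((((y 0 : ℝ):ℂ))^2 + (((y 1 : ℝ):ℂ))^2 + (((y 2 : ℝ):ℂ))^2)/4 * Complex.I_sq

section conf
variable {u : Fin 3 → ℂ → Fin 3 → ℝ} {U : Set ℂ}

lemma phi_zero_on_Dhat
    (hconf : ∀ j, ∀ z ∈ Dhat,
      (∑ k : Fin 3, vX (u j) z k * vY (u j) z k) = 0 ∧
      (∑ k : Fin 3, (vX (u j) z k) ^ 2) = (∑ k : Fin 3, (vY (u j) z k) ^ 2) ∧
      vX (u j) z ≠ 0)
    (j : Fin 3) {z : ℂ} (hz : z ∈ Dhat) :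
    ∑ k : Fin 3, (gg u j k z)^2 = 0 := by
  obtain ⟨hA, hB, -⟩ := hconf j z hz
  simp only [vX, vY] at hA hB
  simp only [gg]
  rw [sum_sq_expand (fun k => fderiv ℝ (fun x => u j x k) z 1)
    (fun k => fderiv ℝ (fun x => u j x k) z I)]
  simp only [hB, hA, sub_self]
  norm_num

lemma sum_gg_mul_deriv_zero (hU : IsOpen U)
    (hsm : ∀ j k, ContDiffOn ℝ (⊤ : ℕ∞) (fun z => u j z k) U)
    (hlap : ∀ j k, ∀ z ∈ U, lap (fun w => u j w k) z = 0)
    {W : Set ℂ} (hWopen : IsOpen W) (hWU : W ⊆ U)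
    (hphi : ∀ j, ∀ z ∈ W, ∑ k : Fin 3, (gg u j k z)^2 = 0)
    (j : Fin 3) {z : ℂ} (hz : z ∈ W) :
    ∑ k : Fin 3, gg u j k z * deriv (gg u j k) z = 0 := by
  have hD : HasDerivAt (fun w => ∑ k : Fin 3, (gg u j k w)^2)
      (∑ k : Fin 3, (2:ℕ) * (gg u j k z)^1 * deriv (gg u j k) z) z :=
    HasDerivAt.fun_sum fun k _ => (gg_hasDerivAt hU hsm hlap j k (hWU hz)).pow 2
  have hev : (fun w => ∑ k : Fin 3, (gg u j k w)^2) =ᶠ[𝓝 z] (fun _ => (0:ℂ)) := by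
    filter_upwards [hWopen.mem_nhds hz] with y hy
    exact hphi j y hy
  have h0 : deriv (fun w => ∑ k : Fin 3, (gg u j k w)^2) z = 0 := by
    rw [hev.deriv_eq]; exact deriv_const z 0
  have hder := hD.deriv
  rw [h0] at hder
  calc ∑ k : Fin 3, gg u j k z * deriv (gg u j k) z
      = (1/2 : ℂ) * ∑ k : Fin 3, ((2:ℕ):ℂ) * (gg u j k z)^1 * deriv (gg u j k) z := by
        rw [Finset.mul_sum]
        refine Finset.sum_congr rfl fun k _ => by push_cast; ring
    _ = 0 := by rw [← hder]; ring
end conf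

lemma line_hasDerivAt (s : ℝ) : HasDerivAt (fun r : ℝ => (r:ℂ) * I) I s := by
  have h : HasDerivAt (fun r : ℝ => (r:ℂ)) 1 s := by
    simpa using (hasDerivAt_id s).ofReal_comp
  simpa using h.mul_const I

lemma gamma_mem_Dhat {s : ℝ} (hs : |s| ≤ 1) : (s:ℂ) * I ∈ Dhat := by
  constructor
  · have h1 : ‖(s:ℂ)*I‖ = |s| := by
      simp [map_mul]
    rw [h1]; exact hs
  · simp

section gam
variable {u : Fin 3 → ℂ → Fin 3 → ℝ} {U : Set ℂ}

lemma im_hh_zero_on_gamma (hU : IsOpen U)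
    (hsm : ∀ j k, ContDiffOn ℝ (⊤ : ℕ∞) (fun z => u j z k) U)
    (hlap : ∀ j k, ∀ z ∈ U, lap (fun w => u j w k) z = 0)
    (hDU : Dhat ⊆ U)
    (hjun : ∀ z ∈ gammaJ, u 0 z = u 1 z ∧ u 1 z = u 2 z)
    (hjx : ∀ z ∈ gammaJ, ∀ k, vX (u 0) z k + vX (u 1) z k + vX (u 2) z k = 0)
    {t : ℝ} (ht : |t| < 1) : (hh u ((t:ℂ)*I)).im = 0 := by
  set z₀ : ℂ := (t:ℂ)*I with hz₀
  have hmemγ : ∀ {s : ℝ}, |s| ≤ 1 → (s:ℂ)*I ∈ gammaJ := by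
    intro s hs; constructor <;> simp [gammaJ, hs]
  have hmemU : ∀ {s : ℝ}, |s| ≤ 1 → (s:ℂ)*I ∈ U := fun hs => hDU (gamma_mem_Dhat hs)
  have hz₀U : z₀ ∈ U := hmemU ht.le
  -- second-derivative names
  set X : Fin 3 → Fin 3 → ℝ := fun j k =>
    fderiv ℝ (fun w => fderiv ℝ (fun x => u j x k) w 1) z₀ 1 with hX
  set Y : Fin 3 → Fin 3 → ℝ := fun j k =>
    fderiv ℝ (fun w => fderiv ℝ (fun x => u j x k) w I) z₀ 1 with hY
  -- derivative of gg
  have hdval : ∀ j k, deriv (gg u j k) z₀ = (1/2:ℂ)*(↑(X j k) - I*↑(Y j k)) := by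
    intro j k
    exact (holo_of_harmonic hU (hsm j k) (hlap j k) hz₀U).deriv
  -- tangential facts
  have hFyD : ∀ j k (s : ℝ), |s| ≤ 1 →
      HasDerivAt (fun r : ℝ => fderiv ℝ (fun x => u j x k) ((r:ℂ)*I) I)
        (fderiv ℝ (fun w => fderiv ℝ (fun x => u j x k) w I) ((s:ℂ)*I) I) s := by
    intro j k s hs
    exact ((diffAt_of_contDiffOn hU (contDiffOn_fderiv_apply hU (hsm j k) I)
      (hmemU hs)).hasFDerivAt).comp_hasDerivAt s (line_hasDerivAt s)
  have hFxD : ∀ j k (s : ℝ), |s| ≤ 1 →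
      HasDerivAt (fun r : ℝ => fderiv ℝ (fun x => u j x k) ((r:ℂ)*I) 1)
        (fderiv ℝ (fun w => fderiv ℝ (fun x => u j x k) w 1) ((s:ℂ)*I) I) s := by
    intro j k s hs
    exact ((diffAt_of_contDiffOn hU (contDiffOn_fderiv_apply hU (hsm j k) 1)
      (hmemU hs)).hasFDerivAt).comp_hasDerivAt s (line_hasDerivAt s)
  have hqD : ∀ j k (s : ℝ), |s| ≤ 1 →
      HasDerivAt (fun r : ℝ => u j ((r:ℂ)*I) k)
        (fderiv ℝ (fun x => u j x k) ((s:ℂ)*I) I) s := by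
    intro j k s hs
    exact ((diffAt_of_contDiffOn hU (hsm j k) (hmemU hs)).hasFDerivAt).comp_hasDerivAt
      s (line_hasDerivAt s)
  -- q_j equal on gamma
  have hq_eq : ∀ j k (s : ℝ), |s| ≤ 1 → u j ((s:ℂ)*I) k = u 0 ((s:ℂ)*I) k := by
    intro j k s hs
    obtain ⟨h01, h12⟩ := hjun _ (hmemγ hs)
    fin_cases j
    · rfl
    · exact (congrFun h01 k).symm
    · exact (congrFun (h01.trans h12) k).symm
  -- first tangential derivatives equal on open gamma
  have hFy_eq : ∀ j k (s : ℝ), |s| < 1 →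
      fderiv ℝ (fun x => u j x k) ((s:ℂ)*I) I = fderiv ℝ (fun x => u 0 x k) ((s:ℂ)*I) I := by
    intro j k s hs
    have hev : (fun r : ℝ => u j ((r:ℂ)*I) k) =ᶠ[𝓝 s] (fun r : ℝ => u 0 ((r:ℂ)*I) k) := by
      have : ∀ᶠ r in 𝓝 s, |r| < 1 := by
        have : Continuous (fun r : ℝ => |r|) := continuous_abs
        exact this.continuousAt.eventually_lt continuousAt_const hs
      filter_upwards [this] with r hr
      exact hq_eq j k r hr.le
    have h1 := (hqD j k s hs.le).deriv
    have h2 := (hqD 0 k s hs.le).deriv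
    rw [← h1, ← h2, hev.deriv_eq]
  -- second tangential derivative equality at t
  have hYY_eq : ∀ j k, fderiv ℝ (fun w => fderiv ℝ (fun x => u j x k) w I) z₀ I
      = fderiv ℝ (fun w => fderiv ℝ (fun x => u 0 x k) w I) z₀ I := by
    intro j k
    have hev : (fun r : ℝ => fderiv ℝ (fun x => u j x k) ((r:ℂ)*I) I)
        =ᶠ[𝓝 t] (fun r : ℝ => fderiv ℝ (fun x => u 0 x k) ((r:ℂ)*I) I) := by
      have : ∀ᶠ r in 𝓝 t, |r| < 1 :=
        continuous_abs.continuousAt.eventually_lt continuousAt_const ht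
      filter_upwards [this] with r hr
      exact hFy_eq j k r hr
    have h1 := (hFyD j k t ht.le).deriv
    have h2 := (hFyD 0 k t ht.le).deriv
    rw [← h1, ← h2, hev.deriv_eq]
  -- X equal across j  (via laplace)
  have hlapz : ∀ j k, X j k = -(fderiv ℝ (fun w => fderiv ℝ (fun x => u j x k) w I) z₀ I) := by
    intro j k
    have := hlap j k z₀ hz₀U
    simp only [lap] at this
    simp only [hX]
    linarith
  have hX_eq : ∀ j k, X j k = X 0 k := by
    intro j k
    rw [hlapz j k, hlapz 0 k, hYY_eq j k]
  -- sum of Y over j vanishes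
  have hYsum : ∀ k, Y 0 k + Y 1 k + Y 2 k = 0 := by
    intro k
    have hsder : HasDerivAt (fun r : ℝ =>
        fderiv ℝ (fun x => u 0 x k) ((r:ℂ)*I) 1 + fderiv ℝ (fun x => u 1 x k) ((r:ℂ)*I) 1
          + fderiv ℝ (fun x => u 2 x k) ((r:ℂ)*I) 1)
        (fderiv ℝ (fun w => fderiv ℝ (fun x => u 0 x k) w 1) z₀ I
          + fderiv ℝ (fun w => fderiv ℝ (fun x => u 1 x k) w 1) z₀ I
          + fderiv ℝ (fun w => fderiv ℝ (fun x => u 2 x k) w 1) z₀ I) t :=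
      ((hFxD 0 k t ht.le).add (hFxD 1 k t ht.le)).add (hFxD 2 k t ht.le)
    have hev : (fun r : ℝ =>
        fderiv ℝ (fun x => u 0 x k) ((r:ℂ)*I) 1 + fderiv ℝ (fun x => u 1 x k) ((r:ℂ)*I) 1
          + fderiv ℝ (fun x => u 2 x k) ((r:ℂ)*I) 1) =ᶠ[𝓝 t] (fun _ => (0:ℝ)) := by
      have : ∀ᶠ r in 𝓝 t, |r| < 1 :=
        continuous_abs.continuousAt.eventually_lt continuousAt_const ht
      filter_upwards [this] with r hr
      exact hjx _ (hmemγ hr.le) k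
    have h0 : deriv (fun r : ℝ =>
        fderiv ℝ (fun x => u 0 x k) ((r:ℂ)*I) 1 + fderiv ℝ (fun x => u 1 x k) ((r:ℂ)*I) 1
          + fderiv ℝ (fun x => u 2 x k) ((r:ℂ)*I) 1) t = 0 := by
      rw [hev.deriv_eq]; exact deriv_const t 0
    have hsum0 := hsder.deriv
    rw [h0] at hsum0
    -- convert x-y mixed derivatives to Y via Clairaut
    have hcl : ∀ j : Fin 3, fderiv ℝ (fun w => fderiv ℝ (fun x => u j x k) w 1) z₀ I = Y j k :=
      fun j => clairaut hU (hsm j k) hz₀U 1 I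
    rw [hcl 0, hcl 1, hcl 2] at hsum0
    linarith
  -- conclude
  have imval : ∀ A B : ℝ, (((1/2:ℂ)*((A:ℂ) - I*(B:ℂ)))^2).im = -(A*B)/2 := by
    intro A B
    simp [pow_two, Complex.mul_im, Complex.mul_re]
    ring
  simp only [hh, Fin.sum_univ_three, hdval, Complex.add_im, imval]
  have e1 := hX_eq 1 0; have e2 := hX_eq 2 0
  have e3 := hX_eq 1 1; have e4 := hX_eq 2 1
  have e5 := hX_eq 1 2; have e6 := hX_eq 2 2
  have s0 := hYsum 0; have s1 := hYsum 1; have s2 := hYsum 2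
  linear_combination (-(Y 1 0)/2)*e1 + (-(Y 2 0)/2)*e2 + (-(Y 1 1)/2)*e3 + (-(Y 2 1)/2)*e4
    + (-(Y 1 2)/2)*e5 + (-(Y 2 2)/2)*e6 + (-(X 0 0)/2)*s0 + (-(X 0 1)/2)*s1 + (-(X 0 2)/2)*s2
end gam

lemma exp_line_hasDerivAt (θ : ℝ) :
    HasDerivAt (fun s : ℝ => Complex.exp ((s:ℂ)*I)) (Complex.exp ((θ:ℂ)*I) * I) θ := by
  have h1 : HasDerivAt (fun z : ℂ => Complex.exp (z*I)) (Complex.exp ((θ:ℂ)*I) * I) ((θ:ℂ)) := by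
    have := (Complex.hasDerivAt_exp (((θ:ℂ))*I)).comp ((θ:ℂ))
      ((hasDerivAt_id ((θ:ℂ))).mul_const I)
    simpa [Function.comp_def] using this
  exact h1.comp_ofReal

lemma comp_exp_hasDerivAt {F : ℂ → ℂ} {d : ℂ} {θ : ℝ}
    (hF : HasDerivAt F d (Complex.exp ((θ:ℂ)*I))) :
    HasDerivAt (fun s : ℝ => F (Complex.exp ((s:ℂ)*I)))
      (Complex.exp ((θ:ℂ)*I) * I * d) θ := by
  have h := (hF.hasFDerivAt.restrictScalars ℝ).comp_hasDerivAt θ (exp_line_hasDerivAt θ)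
  simpa [Function.comp_def, smul_eq_mul, mul_comm, mul_assoc, mul_left_comm] using h

lemma comp_exp_hasDerivAt_real {f : ℂ → ℝ} {θ : ℝ}
    (hf : DifferentiableAt ℝ f (Complex.exp ((θ:ℂ)*I))) :
    HasDerivAt (fun s : ℝ => f (Complex.exp ((s:ℂ)*I)))
      (fderiv ℝ f (Complex.exp ((θ:ℂ)*I)) (Complex.exp ((θ:ℂ)*I) * I)) θ :=
  hf.hasFDerivAt.comp_hasDerivAt θ (exp_line_hasDerivAt θ)

lemma contDiff_expline : ContDiff ℝ (⊤ : ℕ∞) (fun s : ℝ => Complex.exp ((s:ℂ)*I)) := by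
  have h1 : ContDiff ℝ (⊤ : ℕ∞) (fun s : ℝ => (s:ℂ)*I) :=
    Complex.ofRealCLM.contDiff.mul contDiff_const
  have h2 : ContDiff ℝ (⊤ : ℕ∞) Complex.exp := Complex.contDiff_exp
  exact h2.comp h1

lemma exp_mem_sigma {θ : ℝ} (hθ : θ ∈ Set.Icc (-(Real.pi/2)) (Real.pi/2)) :
    Complex.exp ((θ:ℂ)*I) ∈ sigmaArc := by
  constructor
  · rw [Complex.norm_exp]
    simp
  · rw [Complex.exp_ofReal_mul_I_re]
    exact Real.cos_nonneg_of_mem_Icc hθ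

lemma sigma_sub_Dhat : sigmaArc ⊆ Dhat := fun z hz => ⟨le_of_eq hz.1, hz.2⟩

lemma deriv_eq_on_open {f g : ℝ → ℝ} {s : Set ℝ} (hs : IsOpen s) {θ : ℝ} (hθ : θ ∈ s)
    (heq : ∀ x ∈ s, f x = g x) {d e : ℝ} (hf : HasDerivAt f d θ) (hg : HasDerivAt g e θ) :
    d = e := by
  have hev : f =ᶠ[𝓝 θ] g := by
    filter_upwards [hs.mem_nhds hθ] with x hx using heq x hx
  rw [← hf.deriv, ← hg.deriv, hev.deriv_eq]

lemma mul_re_gg (z : ℂ) (fx fy : ℝ) :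
    (z * ((1/2:ℂ)*((fx:ℂ) - I*(fy:ℂ)))).re = (z.re * fx + z.im * fy)/2 := by
  simp [Complex.mul_re, Complex.mul_im]
  ring

lemma mul_im_gg (z : ℂ) (fx fy : ℝ) :
    (z * ((1/2:ℂ)*((fx:ℂ) - I*(fy:ℂ)))).im = (z.im * fx - z.re * fy)/2 := by
  simp [Complex.mul_re, Complex.mul_im]
  ring

section sig
variable {u : Fin 3 → ℂ → Fin 3 → ℝ} {U : Set ℂ}

lemma im_z4_zero_on_sigma (hU : IsOpen U)
    (hsm : ∀ j k, ContDiffOn ℝ (⊤ : ℕ∞) (fun z => u j z k) U)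
    (hlap : ∀ j k, ∀ z ∈ U, lap (fun w => u j w k) z = 0)
    (hconf : ∀ j, ∀ z ∈ Dhat,
      (∑ k : Fin 3, vX (u j) z k * vY (u j) z k) = 0 ∧
      (∑ k : Fin 3, (vX (u j) z k) ^ 2) = (∑ k : Fin 3, (vY (u j) z k) ^ 2) ∧
      vX (u j) z ≠ 0)
    (hfree : ∀ j, ∀ z ∈ sigmaArc,
      (∑ k : Fin 3, (u j z k) ^ 2) = 1 ∧
      ∃ c : ℝ, ∀ k, z.re * vX (u j) z k + z.im * vY (u j) z k = c * u j z k)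
    {W : Set ℂ} (hWopen : IsOpen W) (hWU : W ⊆ U) (hDW : Dhat ⊆ W)
    (hphi : ∀ j', ∀ z ∈ W, ∑ k : Fin 3, (gg u j' k z)^2 = 0)
    (j : Fin 3) {θ : ℝ} (hθ : θ ∈ Set.Ioo (-(Real.pi/2)) (Real.pi/2)) :
    ((Complex.exp ((θ:ℂ)*I))^4
      * ∑ k : Fin 3, (deriv (gg u j k) (Complex.exp ((θ:ℂ)*I)))^2).im = 0 := by
  set J : Set ℝ := Set.Ioo (-(Real.pi/2)) (Real.pi/2) with hJ
  have hJopen : IsOpen J := isOpen_Ioo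
  set E : ℝ → ℂ := fun s => Complex.exp ((s:ℂ)*I) with hE
  have hJσ : ∀ s ∈ J, E s ∈ sigmaArc := fun s hs => exp_mem_sigma ⟨hs.1.le, hs.2.le⟩
  have hJD : ∀ s ∈ J, E s ∈ Dhat := fun s hs => sigma_sub_Dhat (hJσ s hs)
  have hJW : ∀ s ∈ J, E s ∈ W := fun s hs => hDW (hJD s hs)
  have hJU : ∀ s ∈ J, E s ∈ U := fun s hs => hWU (hJW s hs)
  set T : Set ℝ := E ⁻¹' U with hT
  have hTopen : IsOpen T := hU.preimage contDiff_expline.continuous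
  have hJT : J ⊆ T := fun s hs => hJU s hs
  have hθT : θ ∈ T := hJT hθ
  -- the basic functions of θ
  set p : Fin 3 → ℝ → ℝ := fun k s => u j (E s) k with hpdef
  set P1 : Fin 3 → ℝ → ℝ := fun k => deriv (p k) with hP1def
  set P2 : Fin 3 → ℝ → ℝ := fun k => deriv (P1 k) with hP2def
  set a : Fin 3 → ℝ → ℂ := fun k s => E s * gg u j k (E s) with hadef
  set R : Fin 3 → ℝ → ℝ := fun k s => (a k s).re with hRdef
  set M : Fin 3 → ℝ → ℝ := fun k s => (a k s).im with hMdef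
  set c : ℝ → ℝ := fun s => 2 * ∑ k : Fin 3, R k s * p k s with hcdef
  -- differentiability infrastructure
  have hpCD : ∀ k, ContDiffOn ℝ (⊤ : ℕ∞) (p k) T := fun k =>
    ContDiffOn.comp (hsm j k) contDiff_expline.contDiffOn (fun s hs => hs)
  have hp1 : ∀ k, ∀ s ∈ T, HasDerivAt (p k) (P1 k s) s := fun k s hs =>
    (((hpCD k).differentiableOn (by simp)).differentiableAt (hTopen.mem_nhds hs)).hasDerivAt
  have hP1CD : ∀ k, ContDiffOn ℝ (⊤ : ℕ∞) (P1 k) T := fun k =>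
    (hpCD k).deriv_of_isOpen hTopen (by simp)
  have hP1D : ∀ k, ∀ s ∈ T, HasDerivAt (P1 k) (P2 k s) s := fun k s hs =>
    ((((hP1CD k).differentiableOn (by simp))).differentiableAt (hTopen.mem_nhds hs)).hasDerivAt
  have hpfd : ∀ k, ∀ s ∈ T, HasDerivAt (p k)
      (fderiv ℝ (fun x => u j x k) (E s) (E s * I)) s := fun k s hs =>
    comp_exp_hasDerivAt_real (diffAt_of_contDiffOn hU (hsm j k) hs)
  have hP1val : ∀ k, ∀ s ∈ T, P1 k s = fderiv ℝ (fun x => u j x k) (E s) (E s * I) := by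
    intro k s hs
    have h1 := (hp1 k s hs).deriv
    have h2 := (hpfd k s hs).deriv
    rw [← h1, ← h2]
  have haD : ∀ k, ∀ s ∈ T, HasDerivAt (a k)
      (E s * I * (gg u j k (E s) + E s * deriv (gg u j k) (E s))) s := by
    intro k s hs
    have hgd := gg_hasDerivAt hU hsm hlap j k hs
    have hF : HasDerivAt (fun z : ℂ => z * gg u j k z)
        (gg u j k (E s) + E s * deriv (gg u j k) (E s)) (E s) := by
      have := (hasDerivAt_id (E s)).mul hgd
      simpa [Pi.mul_def] using this
    exact comp_exp_hasDerivAt hF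
  have hRD : ∀ k, ∀ s ∈ T, HasDerivAt (R k)
      ((E s * I * (gg u j k (E s) + E s * deriv (gg u j k) (E s))).re) s := fun k s hs =>
    Complex.reCLM.hasFDerivAt.comp_hasDerivAt s (haD k s hs)
  have hMD : ∀ k, ∀ s ∈ T, HasDerivAt (M k)
      ((E s * I * (gg u j k (E s) + E s * deriv (gg u j k) (E s))).im) s := fun k s hs =>
    Complex.imCLM.hasFDerivAt.comp_hasDerivAt s (haD k s hs)
  -- pointwise identities on J
  have hC : ∀ s ∈ J, ∑ k : Fin 3, (p k s)^2 = 1 := fun s hs => (hfree j (E s) (hJσ s hs)).1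
  have hJfacts : ∀ s ∈ J, (∀ k, R k s = c s / 2 * p k s) ∧
      (∑ k : Fin 3, (P1 k s)^2 = (c s)^2) := by
    intro s hs
    obtain ⟨hn, c₀, hc₀⟩ := hfree j (E s) (hJσ s hs)
    simp only [vX, vY] at hc₀
    have hRc₀ : ∀ k, R k s = c₀ / 2 * p k s := by
      intro k
      have h1 : R k s = ((E s).re * fderiv ℝ (fun x => u j x k) (E s) 1
          + (E s).im * fderiv ℝ (fun x => u j x k) (E s) I)/2 := by
        simp only [hRdef, hadef, gg]
        exact mul_re_gg _ _ _
      rw [h1, hc₀ k]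
      simp only [hpdef]
      ring
    have hcs : c s = c₀ := by
      simp only [hcdef]
      have : ∀ k : Fin 3, R k s * p k s = c₀ / 2 * (p k s)^2 := by
        intro k; rw [hRc₀ k]; ring
      rw [Finset.sum_congr rfl (fun k _ => this k), ← Finset.mul_sum, hn]
      ring
    constructor
    · intro k; rw [hcs]; exact hRc₀ k
    · -- conformality identity
      obtain ⟨hA, hB, -⟩ := hconf j (E s) (hJD s hs)
      simp only [vX, vY] at hA hB
      have hxy : (E s).re^2 + (E s).im^2 = 1 := by
        have h1 : ‖E s‖ = 1 := (hJσ s hs).1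
        have := Complex.sq_norm (E s)
        rw [h1] at this
        simpa [Complex.normSq_apply, pow_two] using this.symm
      have hP1v : ∀ k, P1 k s = -(E s).im * fderiv ℝ (fun x => u j x k) (E s) 1
          + (E s).re * fderiv ℝ (fun x => u j x k) (E s) I := by
        intro k
        rw [hP1val k s (hJT hs), clm_decomp' (fderiv ℝ (fun x => u j x k) (E s)) (E s * I)]
        simp only [Complex.mul_re, Complex.mul_im, Complex.I_re, Complex.I_im]
        ring
      have hcp : ∀ k, c s * p k s = (E s).re * fderiv ℝ (fun x => u j x k) (E s) 1
          + (E s).im * fderiv ℝ (fun x => u j x k) (E s) I := by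
        intro k; rw [hcs]
        exact (hc₀ k).symm
      simp only [Fin.sum_univ_three] at hA hB hn ⊢
      rw [hP1v 0, hP1v 1, hP1v 2]
      have e0 := hcp 0; have e1 := hcp 1; have e2 := hcp 2
      set x := (E s).re; set y := (E s).im
      set A0 := fderiv ℝ (fun x => u j x 0) (E s) 1
      set A1 := fderiv ℝ (fun x => u j x 1) (E s) 1
      set A2 := fderiv ℝ (fun x => u j x 2) (E s) 1
      set B0 := fderiv ℝ (fun x => u j x 0) (E s) I
      set B1 := fderiv ℝ (fun x => u j x 1) (E s) I
      set B2 := fderiv ℝ (fun x => u j x 2) (E s) I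
      simp only [hpdef] at hn e0 e1 e2 ⊢
      linear_combination (y^2 - x^2)*hB + (-4*x*y)*hA + (c s^2)*hn
        + (-(c s * u j (E s) 0 + x*A0 + y*B0))*e0
        + (-(c s * u j (E s) 1 + x*A1 + y*B1))*e1
        + (-(c s * u j (E s) 2 + x*A2 + y*B2))*e2
  -- M = -(1/2) P1 on T
  have hMval : ∀ k, ∀ s ∈ T, M k s = -(1/2) * P1 k s := by
    intro k s hs
    have h1 : M k s = ((E s).im * fderiv ℝ (fun x => u j x k) (E s) 1
        - (E s).re * fderiv ℝ (fun x => u j x k) (E s) I)/2 := by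
      simp only [hMdef, hadef, gg]
      exact mul_im_gg _ _ _
    rw [h1, hP1val k s hs, clm_decomp' (fderiv ℝ (fun x => u j x k) (E s)) (E s * I)]
    simp only [Complex.mul_re, Complex.mul_im, Complex.I_re, Complex.I_im]
    ring
  have hpP1 : ∀ s ∈ J, ∑ k : Fin 3, p k s * P1 k s = 0 := by
    intro s hs
    have hd1 : HasDerivAt (fun r => ∑ k : Fin 3, (p k r)^2)
        (∑ k : Fin 3, (2:ℕ) * (p k s)^1 * P1 k s) s :=
      HasDerivAt.fun_sum fun k _ => (hp1 k s (hJT hs)).pow 2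
    have h0 := deriv_eq_on_open hJopen hs hC hd1 (hasDerivAt_const s 1)
    simp only [Fin.sum_univ_three] at h0 ⊢
    push_cast at h0
    linear_combination h0/2
  have hcD : HasDerivAt c (2 * ∑ k : Fin 3,
      ((E θ * I * (gg u j k (E θ) + E θ * deriv (gg u j k) (E θ))).re * p k θ
        + R k θ * P1 k θ)) θ := by
    have h1 := HasDerivAt.fun_sum (fun k (_ : k ∈ Finset.univ) =>
      (hRD k θ hθT).mul (hp1 k θ hθT))
    have h2 := h1.const_mul (2:ℝ)
    simp only [hcdef]
    exact h2
  set c' : ℝ := 2 * ∑ k : Fin 3,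
      ((E θ * I * (gg u j k (E θ) + E θ * deriv (gg u j k) (E θ))).re * p k θ
        + R k θ * P1 k θ) with hc'
  have hReA : ∀ k, (E θ * I * (gg u j k (E θ) + E θ * deriv (gg u j k) (E θ))).re
      = c'/2 * p k θ + c θ/2 * P1 k θ := by
    intro k
    have hder2 : HasDerivAt (fun s => c s / 2 * p k s) (c'/2 * p k θ + c θ/2 * P1 k θ) θ := by
      exact (hcD.div_const 2).mul (hp1 k θ hθT)
    exact deriv_eq_on_open hJopen hθ (fun s hs => (hJfacts s hs).1 k) (hRD k θ hθT) hder2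
  have hImA : ∀ k, (E θ * I * (gg u j k (E θ) + E θ * deriv (gg u j k) (E θ))).im
      = -(1/2) * P2 k θ := by
    intro k
    have hder2 : HasDerivAt (fun s => -(1/2) * P1 k s) (-(1/2) * P2 k θ) θ :=
      (hP1D k θ hθT).const_mul (-(1/2))
    exact deriv_eq_on_open hTopen hθT (fun s hs => hMval k s hs) (hMD k θ hθT) hder2
  have hG1 : ∑ k : Fin 3, (P1 k θ)^2 + ∑ k : Fin 3, p k θ * P2 k θ = 0 := by
    have hd1 : HasDerivAt (fun r => ∑ k : Fin 3, p k r * P1 k r)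
        (∑ k : Fin 3, (P1 k θ * P1 k θ + p k θ * P2 k θ)) θ :=
      HasDerivAt.fun_sum fun k _ => (hp1 k θ hθT).mul (hP1D k θ hθT)
    have h0 := deriv_eq_on_open hJopen hθ hpP1 hd1 (hasDerivAt_const θ 0)
    simp only [Fin.sum_univ_three] at h0 ⊢
    linear_combination h0
  have hG2 : ∑ k : Fin 3, P1 k θ * P2 k θ = c θ * c' := by
    have hd1 : HasDerivAt (fun r => ∑ k : Fin 3, (P1 k r)^2)
        (∑ k : Fin 3, (2:ℕ) * (P1 k θ)^1 * P2 k θ) θ :=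
      HasDerivAt.fun_sum fun k _ => (hP1D k θ hθT).pow 2
    have hd2 : HasDerivAt (fun r => (c r)^2) ((2:ℕ) * (c θ)^1 * c') θ := hcD.pow 2
    have h0 := deriv_eq_on_open hJopen hθ (fun s hs => (hJfacts s hs).2) hd1 hd2
    simp only [Fin.sum_univ_three] at h0 ⊢
    push_cast at h0
    linear_combination h0/2
  have hP1sqθ := (hJfacts θ hθ).2
  have hphi0 := hphi j (E θ) (hJW θ hθ)
  have hgd0 := sum_gg_mul_deriv_zero hU hsm hlap hWopen hWU hphi j (hJW θ hθ)
  set A : Fin 3 → ℂ := fun k => E θ * I * (gg u j k (E θ) + E θ * deriv (gg u j k) (E θ))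
    with hAdef
  have hsplit : (E θ)^4 * ∑ k : Fin 3, (deriv (gg u j k) (E θ))^2
      = - ∑ k : Fin 3, (A k)^2 := by
    simp only [hAdef, Fin.sum_univ_three] at hphi0 hgd0 ⊢
    linear_combination ((E θ)^4*((deriv (gg u j 0) (E θ))^2 + (deriv (gg u j 1) (E θ))^2
          + (deriv (gg u j 2) (E θ))^2)
        + (E θ)^2*((gg u j 0 (E θ))^2 + (gg u j 1 (E θ))^2 + (gg u j 2 (E θ))^2)
        + 2*(E θ)^3*(gg u j 0 (E θ)*deriv (gg u j 0) (E θ)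
          + gg u j 1 (E θ)*deriv (gg u j 1) (E θ)
          + gg u j 2 (E θ)*deriv (gg u j 2) (E θ)))*Complex.I_sq
      + (-(E θ)^2)*hphi0 + (-2*(E θ)^3)*hgd0
  have sqim : ∀ w : ℂ, (w^2).im = 2*w.re*w.im := by
    intro w; rw [pow_two, Complex.mul_im]; ring
  show ((E θ)^4 * ∑ k : Fin 3, (deriv (gg u j k) (E θ))^2).im = 0
  rw [hsplit]
  simp only [Fin.sum_univ_three, Complex.neg_im, Complex.add_im, sqim]
  rw [hReA 0, hReA 1, hReA 2, hImA 0, hImA 1, hImA 2]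
  simp only [Fin.sum_univ_three] at hG1 hG2 hP1sqθ
  linear_combination (c'/2)*hG1 + (-(c'/2))*hP1sqθ + (c θ/2)*hG2
end sig

lemma deriv_zero_of_im_zero {f : ℂ → ℂ} {z d : ℂ} (hf : HasDerivAt f d z)
    (h0 : ∀ᶠ w in 𝓝 z, (f w).im = 0) : d = 0 := by
  have key : ∀ v : ℂ, (v * d).im = 0 := by
    intro v
    have hline : HasDerivAt (fun t : ℝ => z + t • v) v 0 := by
      simpa using ((hasDerivAt_id (0:ℝ)).smul_const v).const_add z
    have hcomp : HasDerivAt (fun t : ℝ => f (z + t • v)) (v * d) 0 := by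
      have h2 := HasFDerivAt.comp_hasDerivAt_of_eq (0:ℝ)
        (hf.hasFDerivAt.restrictScalars ℝ) hline (by simp)
      simpa [Function.comp_def, smul_eq_mul] using h2
    have himd : HasDerivAt (fun t : ℝ => (f (z + t • v)).im) ((v*d).im) 0 :=
      Complex.imCLM.hasFDerivAt.comp_hasDerivAt 0 hcomp
    have htend : Tendsto (fun t : ℝ => z + t • v) (𝓝 0) (𝓝 z) := by
      have := hline.continuousAt.tendsto
      simpa using this
    have hev : (fun t : ℝ => (f (z + t • v)).im) =ᶠ[𝓝 (0:ℝ)] (fun _ => (0:ℝ)) := by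
      filter_upwards [htend.eventually h0] with t ht using ht
    have := himd.deriv
    rw [hev.deriv_eq, deriv_const] at this
    exact this.symm
  have h1 : d.im = 0 := by simpa using key 1
  have h2 : d.re = 0 := by
    have := key I
    simpa [Complex.mul_im] using this
  exact Complex.ext h2 h1

lemma eq_const_on_closure {f : ℂ → ℂ} {S : Set ℂ} {C : ℂ} {z : ℂ} (hz : z ∈ closure S)
    (hc : ContinuousAt f z) (hS : ∀ w ∈ S, f w = C) : f z = C := by
  have h1 : Tendsto f (𝓝[S] z) (𝓝 (f z)) := hc.continuousWithinAt.tendsto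
  have h2 : Tendsto f (𝓝[S] z) (𝓝 C) := by
    refine Filter.Tendsto.congr' ?_ tendsto_const_nhds
    filter_upwards [self_mem_nhdsWithin] with w hw
    exact (hS w hw).symm
  have : (𝓝[S] z).NeBot := mem_closure_iff_nhdsWithin_neBot.mp hz
  exact tendsto_nhds_unique h1 h2

lemma halfdisk_open : IsOpen {z : ℂ | ‖z‖ < 1 ∧ 0 < z.re} := by
  exact (isOpen_lt continuous_norm continuous_const).inter
    (isOpen_lt continuous_const Complex.continuous_re)

lemma halfdisk_convex : Convex ℝ {z : ℂ | ‖z‖ < 1 ∧ 0 < z.re} := by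
  have h1 : {z : ℂ | ‖z‖ < 1 ∧ 0 < z.re}
      = Metric.ball (0:ℂ) 1 ∩ {z : ℂ | 0 < z.re} := by
    ext z
    simp [Metric.mem_ball, Complex.dist_eq, Set.mem_setOf_eq, And.comm]
  rw [h1]
  exact (convex_ball 0 1).inter (convex_halfSpace_re_gt 0)

lemma Dhat_closed : IsClosed Dhat := by
  have h1 : Dhat = {z : ℂ | ‖z‖ ≤ 1} ∩ {z : ℂ | 0 ≤ z.re} := rfl
  rw [h1]
  exact (isClosed_le continuous_norm continuous_const).inter
    (isClosed_le continuous_const Complex.continuous_re)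

lemma Dhat_sub_closure : Dhat ⊆ closure {z : ℂ | ‖z‖ < 1 ∧ 0 < z.re} := by
  intro z hz
  have hz1 : ‖z‖ ≤ 1 := hz.1
  have hz2 : 0 ≤ z.re := hz.2
  rw [Metric.mem_closure_iff]
  intro ε hε
  set t : ℝ := min (ε/2) (1/2) with htdef
  have ht0 : 0 < t := lt_min (by linarith) (by norm_num)
  have ht1 : t ≤ 1/2 := min_le_right _ _
  have htε : t ≤ ε/2 := min_le_left _ _
  have hhalf : ‖(2⁻¹:ℂ)‖ = 2⁻¹ := by
    rw [show (2⁻¹:ℂ) = ((2⁻¹:ℝ):ℂ) by norm_num]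
    rw [Complex.norm_real]
    norm_num
  refine ⟨(1-t) • z + t • (2⁻¹:ℂ), ⟨?_, ?_⟩, ?_⟩
  · show ‖_‖ < 1
    calc ‖(1-t)•z + t•(2⁻¹:ℂ)‖ ≤ ‖(1-t)•z‖ + ‖t•(2⁻¹:ℂ)‖ := norm_add_le _ _
      _ = |1-t| * ‖z‖ + |t| * ‖(2⁻¹:ℂ)‖ := by rw [norm_smul, norm_smul]; rfl
      _ = (1-t)*‖z‖ + t*2⁻¹ := by
          rw [hhalf, _root_.abs_of_nonneg (by linarith : (0:ℝ) ≤ 1-t),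
            _root_.abs_of_nonneg ht0.le]
      _ < 1 := by nlinarith [norm_nonneg z]
  · show 0 < ((1-t) • z + t • (2⁻¹:ℂ)).re
    have hre : ((1-t) • z + t • (2⁻¹:ℂ)).re = (1-t) * z.re + t * 2⁻¹ := by
      simp [Complex.add_re, Complex.real_smul, Complex.mul_re]
    rw [hre]
    nlinarith
  · have hsub : z - ((1-t) • z + t • (2⁻¹:ℂ)) = t • (z - 2⁻¹) := by
      simp only [Complex.real_smul]
      push_cast
      ring
    rw [Complex.dist_eq, hsub, norm_smul]
    have hb : ‖(z - 2⁻¹:ℂ)‖ ≤ 3/2 := by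
      calc ‖(z - 2⁻¹:ℂ)‖ ≤ ‖z‖ + ‖(2⁻¹:ℂ)‖ := norm_sub_le _ _
        _ ≤ 1 + 2⁻¹ := by rw [hhalf]; linarith
        _ = 3/2 := by norm_num
    have habs : |t| = t := _root_.abs_of_nonneg ht0.le
    rw [Real.norm_eq_abs, habs]
    nlinarith

/-- Under the standing hypotheses, with `h(z) = Σ_j u_{j,zz} · u_{j,zz}`,
`z⁴ h(z) = 0` on `D̂`; equivalently `h ≡ 0` on `D̂`. -/
theorem z4h_vanishes (u : Fin 3 → ℂ → Fin 3 → ℝ) (U : Set ℂ)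
    (hyp : StandingHyp u U) :
    ∀ z ∈ Dhat, z ^ 4 * hfun u z = 0 ∧ hfun u z = 0 := by
  obtain ⟨hU, hDU, hsm, hlap, hconf, hjun, hjx, hfree⟩ := hyp
  have hhalfcast : (2⁻¹:ℂ) = ((2⁻¹:ℝ):ℂ) := by norm_num
  have hhalfD : (2⁻¹:ℂ) ∈ Dhat := by
    constructor
    · show ‖(2⁻¹:ℂ)‖ ≤ 1
      rw [hhalfcast, Complex.norm_real, Real.norm_eq_abs,
        abs_of_pos (by norm_num : (0:ℝ) < 2⁻¹)]
      norm_num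
    · rw [hhalfcast, Complex.ofReal_re]; norm_num
  have hDconv : Convex ℝ Dhat := by
    have h1 : Dhat = Metric.closedBall (0:ℂ) 1 ∩ {z : ℂ | 0 ≤ z.re} := by
      ext z
      simp [Dhat, Metric.mem_closedBall, Complex.dist_eq, And.comm]
    rw [h1]
    exact (convex_closedBall 0 1).inter (convex_halfSpace_re_ge 0)
  set W : Set ℂ := connectedComponentIn U (2⁻¹:ℂ) with hWdef
  have hWopen : IsOpen W := hU.connectedComponentIn
  have hWU : W ⊆ U := connectedComponentIn_subset U _
  have hDW : Dhat ⊆ W :=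
    hDconv.isPreconnected.subset_connectedComponentIn hhalfD hDU
  have hWpre : IsPreconnected W := isPreconnected_connectedComponentIn
  set S : Set ℂ := {z : ℂ | ‖z‖ < 1 ∧ 0 < z.re} with hSdef
  have hSopen : IsOpen S := halfdisk_open
  have hSconv : Convex ℝ S := halfdisk_convex
  have hSD : S ⊆ Dhat := fun z hz => ⟨hz.1.le, hz.2.le⟩
  have hclos : Dhat ⊆ closure S := Dhat_sub_closure
  have hhalfS : (2⁻¹:ℂ) ∈ S := by
    constructor
    · show ‖(2⁻¹:ℂ)‖ < 1
      rw [hhalfcast, Complex.norm_real, Real.norm_eq_abs,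
        abs_of_pos (by norm_num : (0:ℝ) < 2⁻¹)]
      norm_num
    · rw [hhalfcast, Complex.ofReal_re]; norm_num
  -- conformality: φ_j ≡ 0 on W
  have hphi : ∀ j, ∀ z ∈ W, ∑ k : Fin 3, (gg u j k z)^2 = 0 := by
    intro j
    have hphiA : AnalyticOnNhd ℂ (fun z => ∑ k : Fin 3, (gg u j k z)^2) W := by
      apply Finset.analyticOnNhd_fun_sum
      intro k _
      exact ((gg_analytic hU hsm hlap j k).mono hWU).pow 2
    have hz0W : (2⁻¹:ℂ) ∈ W := hDW hhalfD
    have hev : (fun z => ∑ k : Fin 3, (gg u j k z)^2) =ᶠ[𝓝 (2⁻¹:ℂ)] 0 := by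
      filter_upwards [hSopen.mem_nhds hhalfS] with w hw
      exact phi_zero_on_Dhat hconf j (hSD hw)
    have heq := hphiA.eqOn_zero_of_preconnected_of_eventuallyEq_zero hWpre hz0W hev
    intro z hz
    exact heq hz
  -- analytic structure of hh
  have hhA : AnalyticOnNhd ℂ (hh u) U := hh_analytic hU hsm hlap
  have hhCont : ContinuousOn (hh u) U := hhA.continuousOn
  have hHfdiffU : DifferentiableOn ℂ (fun z => z^4 * hh u z) U :=
    (differentiable_pow 4).differentiableOn.mul hhA.differentiableOn
  have hHcontU : ContinuousOn (fun z => z^4 * hh u z) U := hHfdiffU.continuousOn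
  have hclosD : closure S ⊆ Dhat := closure_minimal hSD Dhat_closed
  have hclosU : closure S ⊆ U := fun z hz => hDU (hclosD hz)
  have hSU : S ⊆ U := fun z hz => hDU (hSD hz)
  -- boundary vanishing of Im(z⁴ h)
  have hKzero : ∀ θ' ∈ Set.Ioo (-(Real.pi/2)) (Real.pi/2),
      ((Complex.exp ((θ':ℂ)*I))^4 * hh u (Complex.exp ((θ':ℂ)*I))).im = 0 := by
    intro θ' hθ'
    have h0 := im_z4_zero_on_sigma hU hsm hlap hconf hfree hWopen hWU hDW hphi 0 hθ'
    have h1 := im_z4_zero_on_sigma hU hsm hlap hconf hfree hWopen hWU hDW hphi 1 hθ'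
    have h2 := im_z4_zero_on_sigma hU hsm hlap hconf hfree hWopen hWU hDW hphi 2 hθ'
    have hsum : (Complex.exp ((θ':ℂ)*I))^4 * hh u (Complex.exp ((θ':ℂ)*I))
        = (Complex.exp ((θ':ℂ)*I))^4
            * (∑ k : Fin 3, (deriv (gg u 0 k) (Complex.exp ((θ':ℂ)*I)))^2)
          + (Complex.exp ((θ':ℂ)*I))^4
            * (∑ k : Fin 3, (deriv (gg u 1 k) (Complex.exp ((θ':ℂ)*I)))^2)
          + (Complex.exp ((θ':ℂ)*I))^4
            * (∑ k : Fin 3, (deriv (gg u 2 k) (Complex.exp ((θ':ℂ)*I)))^2) := by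
      simp only [hh, Fin.sum_univ_three]
      ring
    rw [hsum]
    simp only [Complex.add_im]
    rw [h0, h1, h2]
    norm_num
  have hbd : ∀ z ∈ frontier S, (z^4 * hh u z).im = 0 := by
    intro z hz
    rw [hSopen.frontier_eq] at hz
    obtain ⟨hzc, hznS⟩ := hz
    have hzD : z ∈ Dhat := hclosD hzc
    by_cases habs : ‖z‖ = 1
    · by_cases hre : 0 < z.re
      · -- interior arc point
        set θ := Complex.arg z with hθdef
        have hargθ : |θ| < Real.pi/2 :=
          Complex.abs_arg_lt_pi_div_two_iff.mpr (Or.inl hre)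
        have hθIoo : θ ∈ Set.Ioo (-(Real.pi/2)) (Real.pi/2) := by
          rcases abs_lt.mp hargθ with ⟨h1, h2⟩
          exact ⟨by linarith, h2⟩
        have hzexp : Complex.exp ((θ:ℂ)*I) = z := by
          have h := Complex.norm_mul_exp_arg_mul_I z
          rw [habs] at h
          simpa using h
        rw [← hzexp]
        exact hKzero θ hθIoo
      · -- corner: z = ± i
        have hre0 : z.re = 0 := le_antisymm (not_lt.mp hre) hzD.2
        have him2 : z.im^2 = 1 := by
          have := Complex.sq_norm z
          rw [habs] at this
          simp only [Complex.normSq_apply, hre0] at this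
          nlinarith
        have hcorner : ∀ θc : ℝ, θc ∈ Set.Icc (-(Real.pi/2)) (Real.pi/2) →
            z = Complex.exp ((θc:ℂ)*I) →
            (z^4 * hh u z).im = 0 := by
          intro θc hθc hzeq
          set K : ℝ → ℝ := fun θ' =>
            ((Complex.exp ((θ':ℂ)*I))^4 * hh u (Complex.exp ((θ':ℂ)*I))).im with hKdef
          have hzU : z ∈ U := hDU hzD
          have hKcont : ContinuousAt K θc := by
            have h1 : ContinuousAt (fun w : ℂ => w^4*hh u w) (Complex.exp ((θc:ℂ)*I)) := by
              rw [← hzeq]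
              exact hHcontU.continuousAt (hU.mem_nhds hzU)
            have h2 : ContinuousAt (fun θ' : ℝ => Complex.exp ((θ':ℂ)*I)) θc :=
              contDiff_expline.continuous.continuousAt
            have hcomp : ContinuousAt
                (fun θ' : ℝ => (Complex.exp ((θ':ℂ)*I))^4 * hh u (Complex.exp ((θ':ℂ)*I))) θc :=
              ContinuousAt.comp (g := fun w : ℂ => w^4 * hh u w)
                (f := fun θ' : ℝ => Complex.exp ((θ':ℂ)*I)) h1 h2
            exact ContinuousAt.comp (g := Complex.im) Complex.continuous_im.continuousAt hcomp
          have hne : (Real.pi/2) ≠ -(Real.pi/2) := by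
            have := Real.pi_pos; intro h; linarith
          have hmemclos : θc ∈ closure (Set.Ioo (-(Real.pi/2)) (Real.pi/2)) := by
            rw [closure_Ioo (Ne.symm hne)]
            exact hθc
          have hnb : (𝓝[Set.Ioo (-(Real.pi/2)) (Real.pi/2)] θc).NeBot :=
            mem_closure_iff_nhdsWithin_neBot.mp hmemclos
          have h1 : Tendsto K (𝓝[Set.Ioo (-(Real.pi/2)) (Real.pi/2)] θc) (𝓝 (K θc)) :=
            hKcont.continuousWithinAt.tendsto
          have h2 : Tendsto K (𝓝[Set.Ioo (-(Real.pi/2)) (Real.pi/2)] θc) (𝓝 0) := by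
            refine Filter.Tendsto.congr' ?_ tendsto_const_nhds
            filter_upwards [self_mem_nhdsWithin] with w hw
            exact (hKzero w hw).symm
          have hK0 : K θc = 0 := tendsto_nhds_unique h1 h2
          rw [hzeq]
          exact hK0
        have himcase : z.im = 1 ∨ z.im = -1 := by
          have hfac : (z.im - 1)*(z.im + 1) = 0 := by nlinarith
          rcases mul_eq_zero.mp hfac with h | h
          · left; linarith
          · right; linarith
        rcases himcase with h | h
        · have hz_eq : z = Complex.exp ((↑(Real.pi/2):ℂ)*I) := by
            have he : Complex.exp ((↑(Real.pi/2):ℂ)*I) = Complex.I := by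
              rw [Complex.exp_mul_I, ← Complex.ofReal_cos, ← Complex.ofReal_sin,
                Real.cos_pi_div_two, Real.sin_pi_div_two]
              simp
            rw [he]
            apply Complex.ext <;> simp [hre0, h]
          exact hcorner (Real.pi/2) ⟨by linarith [Real.pi_pos], le_refl _⟩ hz_eq
        · have hz_eq : z = Complex.exp ((↑(-(Real.pi/2)):ℂ)*I) := by
            have he : Complex.exp ((↑(-(Real.pi/2)):ℂ)*I) = -Complex.I := by
              rw [Complex.exp_mul_I, ← Complex.ofReal_cos, ← Complex.ofReal_sin]
              rw [Real.cos_neg, Real.sin_neg, Real.cos_pi_div_two, Real.sin_pi_div_two]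
              simp
            rw [he]
            apply Complex.ext <;> simp [hre0, h]
          exact hcorner (-(Real.pi/2)) ⟨le_refl _, by linarith [Real.pi_pos]⟩ hz_eq
    · -- junction segment
      have habs' : ‖z‖ < 1 := lt_of_le_of_ne hzD.1 habs
      have hre0 : z.re = 0 := by
        by_contra h
        exact hznS ⟨habs', lt_of_le_of_ne hzD.2 (Ne.symm h)⟩
      have him : |z.im| < 1 := lt_of_le_of_lt (Complex.abs_im_le_norm z) habs'
      have hzeq : z = (z.im:ℂ) * I := by
        apply Complex.ext
        · simp [hre0]
        · simp
      have hI4 : (I:ℂ)^4 = 1 := by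
        rw [(by norm_num : (4:ℕ) = 2*2), pow_mul, Complex.I_sq]
        norm_num
      have h4 : ((z.im:ℂ)*I)^4 = ((z.im^4 : ℝ):ℂ) := by
        rw [mul_pow, hI4]
        push_cast
        ring
      rw [hzeq, h4]
      have him0 := im_hh_zero_on_gamma hU hsm hlap hDU hjun hjx him
      rw [Complex.mul_im, him0, Complex.ofReal_im]
      simp
  -- maximum modulus: Im(z⁴h) = 0 on closure S
  have hbS : Bornology.IsBounded S := by
    apply (Metric.isBounded_ball (x := (0:ℂ)) (r := 2)).subset
    intro z hz
    have h1 : ‖z‖ < 1 := hz.1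
    simp only [Metric.mem_ball, Complex.dist_eq, sub_zero]
    linarith
  have hHdS : DifferentiableOn ℂ (fun z => z^4 * hh u z) S := hHfdiffU.mono hSU
  have hHcS : ContinuousOn (fun z => z^4 * hh u z) (closure S) := hHcontU.mono hclosU
  have hexp1 : DiffContOnCl ℂ (fun z => Complex.exp (-(I * (z^4 * hh u z)))) S := by
    refine ⟨fun z hz => ?_, ?_⟩
    · exact (((hHdS z hz).const_mul I).neg).cexp
    · exact Complex.continuous_exp.comp_continuousOn ((continuousOn_const.mul hHcS).neg)
  have hexp2 : DiffContOnCl ℂ (fun z => Complex.exp (I * (z^4 * hh u z))) S := by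
    refine ⟨fun z hz => ?_, ?_⟩
    · exact ((hHdS z hz).const_mul I).cexp
    · exact Complex.continuous_exp.comp_continuousOn (continuousOn_const.mul hHcS)
  have hIm0 : ∀ z ∈ closure S, ((z^4 * hh u z)).im = 0 := by
    intro z hz
    have hle1 : ‖Complex.exp (-(I * (z^4 * hh u z)))‖ ≤ 1 := by
      apply Complex.norm_le_of_forall_mem_frontier_norm_le hbS hexp1 _ hz
      intro w hw
      rw [Complex.norm_exp]
      have he : (-(I * (w^4 * hh u w))).re = (w^4 * hh u w).im := by
        simp [Complex.mul_re]
      rw [he, hbd w hw]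
      simp
    have hle2 : ‖Complex.exp (I * (z^4 * hh u z))‖ ≤ 1 := by
      apply Complex.norm_le_of_forall_mem_frontier_norm_le hbS hexp2 _ hz
      intro w hw
      rw [Complex.norm_exp]
      have he : ((I * (w^4 * hh u w))).re = -(w^4 * hh u w).im := by
        simp [Complex.mul_re]
      rw [he, hbd w hw]
      simp
    rw [Complex.norm_exp] at hle1 hle2
    have e1 : (-(I * (z^4 * hh u z))).re = (z^4 * hh u z).im := by simp [Complex.mul_re]
    have e2 : ((I * (z^4 * hh u z))).re = -(z^4 * hh u z).im := by simp [Complex.mul_re]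
    rw [e1] at hle1
    rw [e2] at hle2
    have hh1 := Real.exp_le_one_iff.mp hle1
    have hh2 := Real.exp_le_one_iff.mp hle2
    linarith
  -- constancy on S
  have hfd0 : ∀ x ∈ S, fderivWithin ℂ (fun z => z^4 * hh u z) S x = 0 := by
    intro x hx
    have hdiff : DifferentiableAt ℂ (fun z => z^4 * hh u z) x :=
      hHfdiffU.differentiableAt (hU.mem_nhds (hSU hx))
    have hder := hdiff.hasDerivAt
    have hd0 : deriv (fun z => z^4 * hh u z) x = 0 := by
      apply deriv_zero_of_im_zero hder
      filter_upwards [hSopen.mem_nhds hx] with w hw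
      exact hIm0 w (subset_closure hw)
    rw [fderivWithin_of_isOpen hSopen hx]
    rw [hd0] at hder
    rw [hder.hasFDerivAt.fderiv]
    ext v
    simp
  have hconstS : ∀ x ∈ S, x^4 * hh u x = (2⁻¹:ℂ)^4 * hh u (2⁻¹:ℂ) := fun x hx =>
    hSconv.is_const_of_fderivWithin_eq_zero hHdS hfd0 hx hhalfS
  have h0D : (0:ℂ) ∈ Dhat := by
    constructor
    · show ‖(0:ℂ)‖ ≤ 1
      simp
    · show (0:ℝ) ≤ (0:ℂ).re
      simp
  have hCval : (2⁻¹:ℂ)^4 * hh u (2⁻¹:ℂ) = 0 := by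
    have h0c := eq_const_on_closure (f := fun z => z^4 * hh u z) (hclos h0D)
      (hHcontU.continuousAt (hU.mem_nhds (hDU h0D))) hconstS
    rw [← h0c]
    simp
  have hHS0 : ∀ x ∈ S, x^4 * hh u x = 0 := fun x hx => (hconstS x hx).trans hCval
  have hhS0 : ∀ x ∈ S, hh u x = 0 := by
    intro x hx
    have hx0 : x ≠ 0 := by
      intro h
      rw [h] at hx
      simpa using hx.2
    rcases mul_eq_zero.mp (hHS0 x hx) with h | h
    · exact absurd h (pow_ne_zero 4 hx0)
    · exact h
  have hhD0 : ∀ z ∈ Dhat, hh u z = 0 := fun z hz =>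
    eq_const_on_closure (hclos hz) (hhCont.continuousAt (hU.mem_nhds (hDU hz))) hhS0
  intro z hz
  have h1 : hfun u z = 0 := by
    rw [hfun_eq_hh hU hsm hlap (hDU hz)]
    exact hhD0 z hz
  exact ⟨by rw [h1, mul_zero], h1⟩
end
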